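/- arXiv:2109.07817 — 3 statements merged into one kernel-verified Lean document; each statement's English description precedes it below -/
import Mathlib

section
/- For N ≥ 5 with N ≠ 6, there exists an odd integer k with gcd(k, 2N) = 1, {k/N} < 1/2, and {k(N-4)/(2N)} + {2k/N} + {k/2} > 1. -/
/-!
Since `k (N - 4) / (2N) = k/2 - 2k/N`, an odd `k` with `1/4 < {k/N} < 1/2` gives `{k/2} = 1/2`
and `{2k/N} = 2{k/N} ∈ (1/2, 1)`, hence `{k/2 - 2k/N} = 3/2 - {2k/N}` and the three fractional
parts add up to `2`. Such a `k`, also coprime to `N`, is written down according to `N mod 4`.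
-/

namespace Int

variable {K : Type*} [Field K] [LinearOrder K] [IsStrictOrderedRing K] [FloorRing K]

theorem fract_intCast_div_two_of_odd {k : ℤ} (hk : Odd k) : fract ((k : K) / 2) = 1 / 2 := by
  obtain ⟨t, rfl⟩ := hk
  rw [fract_eq_iff]
  exact ⟨by norm_num, by norm_num, t, by push_cast; ring⟩

theorem fract_two_mul_of_fract_lt_half {x : K} (hx : fract x < 1 / 2) :
    fract (2 * x) = 2 * fract x := by
  rw [fract_eq_iff]
  refine ⟨by linarith [fract_nonneg x], by linarith, 2 * ⌊x⌋, ?_⟩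
  have := floor_add_fract x
  push_cast
  linarith

theorem fract_sub_add_fract_add_fract_eq_two {x y : K} (hx : fract x = 1 / 2)
    (hy : 1 / 2 < fract y) : fract (x - y) + fract y + fract x = 2 := by
  have hxy : fract (x - y) = 3 / 2 - fract y := by
    rw [fract_eq_iff]
    refine ⟨by linarith [fract_lt_one y], by linarith, ⌊x⌋ - ⌊y⌋ - 1, ?_⟩
    have := floor_add_fract x
    have := floor_add_fract y
    push_cast
    linarith
  rw [hxy, hx]
  ring

theorem fract_mul_sub_four_div_add_fract_add_fract_eq_two {k : ℤ} {N : K} (hk : Odd k)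
    (h₁ : 1 / 4 < fract ((k : K) / N)) (h₂ : fract ((k : K) / N) < 1 / 2) :
    fract ((k : K) * (N - 4) / (2 * N)) + fract (2 * (k : K) / N) + fract ((k : K) / 2) = 2 := by
  have hN : N ≠ 0 := by
    rintro rfl
    norm_num at h₁
  have h2k : fract (2 * (k : K) / N) = 2 * fract ((k : K) / N) := by
    rw [mul_div_assoc]
    exact fract_two_mul_of_fract_lt_half h₂
  rw [show (k : K) * (N - 4) / (2 * N) = k / 2 - 2 * k / N by field_simp; ring]
  exact fract_sub_add_fract_add_fract_eq_two (fract_intCast_div_two_of_odd hk)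
    (by rw [h2k]; linarith)

theorem gcd_two_mul_eq_one_of_odd {k N : ℤ} (hk : Odd k) (h : IsCoprime k N) :
    gcd k (2 * N) = 1 :=
  isCoprime_iff_gcd_eq_one.mp ((isCoprime_two_right.mpr hk).mul_right h)

end Int

theorem Int.exists_odd_isCoprime_quarter_lt_emod_lt_half {N : ℤ} (h5 : 5 ≤ N) (h6 : N ≠ 6) :
    ∃ k : ℤ, Odd k ∧ IsCoprime k N ∧ N < 4 * (k % N) ∧ 2 * (k % N) < N := by
  obtain ⟨m, hm | hm | hm | hm⟩ :
      ∃ m, N = 4 * m ∨ N = 4 * m + 1 ∨ N = 4 * m + 2 ∨ N = 4 * m + 3 := ⟨N / 4, by omega⟩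
  all_goals subst hm
  · refine ⟨2 * m - 1, ⟨m - 1, by ring⟩, ⟨-(2 * m + 1), m, by ring⟩, ?_⟩
    rw [Int.emod_eq_of_lt (by omega) (by omega)]
    omega
  · refine ⟨6 * m + 1, ⟨3 * m, by ring⟩, ⟨-2, 3, by ring⟩, ?_⟩
    rw [show 6 * m + 1 = 2 * m + (4 * m + 1) * 1 by ring, Int.add_mul_emod_self_left,
      Int.emod_eq_of_lt (by omega) (by omega)]
    omega
  · refine ⟨2 * m - 1, ⟨m - 1, by ring⟩, ⟨-(2 * m ^ 2 + 2 * m + 1), m ^ 2, by ring⟩, ?_⟩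
    rw [Int.emod_eq_of_lt (by omega) (by omega)]
    omega
  · refine ⟨2 * m + 1, ⟨m, by ring⟩, ⟨-2, 1, by ring⟩, ?_⟩
    rw [Int.emod_eq_of_lt (by omega) (by omega)]
    omega

theorem stmt_6 (N : ℕ) (hN : 5 ≤ N) (hN6 : N ≠ 6) :
    ∃ k : ℤ, Odd k ∧ Int.gcd k (2 * N) = 1 ∧
      Int.fract ((k : ℝ) / N) < 1 / 2 ∧
      Int.fract ((k : ℝ) * ((N : ℝ) - 4) / (2 * N)) + Int.fract (2 * (k : ℝ) / N)
        + Int.fract ((k : ℝ) / 2) > 1 := by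
  obtain ⟨k, hk, hcop, hquarter, hhalf⟩ :=
    Int.exists_odd_isCoprime_quarter_lt_emod_lt_half (N := N) (by omega) (by omega)
  have hNpos : (0 : ℝ) < N := by positivity
  have hfract : Int.fract ((k : ℝ) / N) = ((k % N : ℤ) : ℝ) / N :=
    Int.fract_div_intCast_eq_div_intCast_mod
  have hquarterR : (N : ℝ) < 4 * ((k % N : ℤ) : ℝ) := by exact_mod_cast hquarter
  have hhalfR : 2 * ((k % N : ℤ) : ℝ) < N := by exact_mod_cast hhalf
  have h₁ : 1 / 4 < Int.fract ((k : ℝ) / N) := by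
    rw [hfract, lt_div_iff₀ hNpos]
    linarith
  have h₂ : Int.fract ((k : ℝ) / N) < 1 / 2 := by
    rw [hfract, div_lt_iff₀ hNpos]
    linarith
  refine ⟨k, hk, Int.gcd_two_mul_eq_one_of_odd hk hcop, h₂, ?_⟩
  rw [Int.fract_mul_sub_four_div_add_fract_add_fract_eq_two hk h₁ h₂]
  norm_num
end

section
/- If b is a real number with 1/2 ≤ b < 1, and there exist nonnegative integers p₀, q₀, r₀ with p₀ ≤ q₀ and p₀(1-b) + q₀b + r₀ = 4/3, then b = 2/3. -/
theorem stmt_11 (b : ℝ) (hb1 : 1 / 2 ≤ b) (hb2 : b < 1)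
    (h : ∃ p₀ q₀ r₀ : ℕ, p₀ ≤ q₀ ∧ (p₀ : ℝ) * (1 - b) + q₀ * b + r₀ = 4 / 3) :
    b = 2 / 3 := by
  obtain ⟨p, q, r, hpq, heq⟩ := h
  obtain ⟨k, rfl⟩ := Nat.exists_eq_add_of_le hpq
  push_cast at heq
  have hk : (k : ℝ) * b = 4 / 3 - ((p : ℝ) + r) := by ring_nf; ring_nf at heq; linarith
  have hkb : 0 ≤ (k : ℝ) * b := by positivity
  have hm : p + r ≤ 1 := by
    by_contra hc
    push_neg at hc
    have h2 : (2 : ℝ) ≤ (p : ℝ) + r := by exact_mod_cast hc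
    linarith
  have hk2 : k ≤ 2 := by
    by_contra hc
    push_neg at hc
    have h3 : (3 : ℝ) ≤ (k : ℝ) := by exact_mod_cast hc
    have hpr : (0 : ℝ) ≤ (p : ℝ) + r := by positivity
    nlinarith
  have hm01 : p + r = 0 ∨ p + r = 1 := by omega
  rcases hm01 with hm0 | hm1
  · have : (p : ℝ) + r = 0 := by exact_mod_cast hm0
    interval_cases k <;> push_cast at hk <;> nlinarith
  · have : (p : ℝ) + r = 1 := by exact_mod_cast hm1
    interval_cases k <;> push_cast at hk <;> nlinarith
end

section
/- If b is rational with 1/2 ≤ b < 1, and if there exist nonnegative integers p, q, r with q > p, q - p = 6, and (q-p)b + p + r ∈ {2, 4}, and also nonnegative integers p₀, q₀, r₀ with p₀(1-b) + q₀b + r₀ = 4/3, then b = 2/3. -/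
theorem stmt_13 (b : ℝ) (hb1 : 1 / 2 ≤ b) (hb2 : b < 1)
    (h1 : ∃ p q r : ℕ, p < q ∧ q - p = 6 ∧
      ((q : ℝ) - p) * b + p + r ∈ ({2, 4} : Set ℝ))
    (h2 : ∃ p₀ q₀ r₀ : ℕ, (p₀ : ℝ) * (1 - b) + q₀ * b + r₀ = 4 / 3) :
    b = 2 / 3 := by
  obtain ⟨p, q, r, hpq, hqp, hmem⟩ := h1
  have hq : q = p + 6 := by omega
  subst hq
  have hcast : ((p + 6 : ℕ) : ℝ) - p = 6 := by push_cast; ring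
  rw [hcast] at hmem
  have hp0 : (0 : ℝ) ≤ p := Nat.cast_nonneg p
  have hr0 : (0 : ℝ) ≤ r := Nat.cast_nonneg r
  rcases hmem with h | h
  · -- 6b + p + r = 2, impossible since 6b ≥ 3
    linarith
  · rw [Set.mem_singleton_iff] at h
    have hpr : p + r = 0 ∨ p + r = 1 := by
      have h1 : ((p + r : ℕ) : ℝ) ≤ 1 := by push_cast; linarith
      have h2 : (0 : ℝ) ≤ ((p + r : ℕ) : ℝ) := Nat.cast_nonneg _
      have : (p + r : ℕ) ≤ 1 := by exact_mod_cast h1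
      omega
    rcases hpr with hpr | hpr
    · have hp : p = 0 := by omega
      have hr : r = 0 := by omega
      subst hp; subst hr
      push_cast at h
      linarith
    · -- b = 1/2, contradict h2
      have hb : b = 1 / 2 := by
        have : ((p + r : ℕ) : ℝ) = 1 := by exact_mod_cast hpr
        push_cast at this
        linarith
      exfalso
      obtain ⟨p₀, q₀, r₀, hh⟩ := h2
      rw [hb] at hh
      have : (3 * p₀ + 3 * q₀ + 6 * r₀ : ℕ) = (8 : ℕ) := by
        have : ((3 * p₀ + 3 * q₀ + 6 * r₀ : ℕ) : ℝ) = 8 := by push_cast; linarith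
        exact_mod_cast this
      omega
end
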